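/- arXiv:2401.04899 — 2 statements merged into one kernel-verified Lean document; each statement's English description precedes it below -/
import Mathlib

section
/- Let Ω₁ ⊂ ℍ_s^n be slice-open and real-path-connected, let Ω₂ ⊂ ℍ_s^n be slice-open and Ω₁-stem-preserving, and let f : Ω₂ → ℍ be weakly slice regular. Then the Ω₁-slice conjugation f^c_{Ω₁} : Ω₁ → ℍ is weakly slice regular. -/
open scoped Quaternion
open Classical

attribute [local instance] Classical.propDecidable

noncomputable section

/-- Continuous-path carrier type: maps from `[0,1]` to `ℂⁿ`. -/
abbrev PathC (n : ℕ) := unitInterval → (Fin n → ℂ)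

/-- The sphere of quaternionic imaginary units `𝕊 = {I : I² = -1}`. -/
def SQ : Set ℍ[ℝ] := {I | I ^ 2 = -1}

/-- A quaternion is real if it is the image of a real number. -/
def IsRealQ (p : ℍ[ℝ]) : Prop := ∃ r : ℝ, p = (r : ℍ[ℝ])

/-- `Ψ_i^I : ℂⁿ → ℂ_Iⁿ`, componentwise `x + y i ↦ x + y I`. -/
def psi {n : ℕ} (I : ℍ[ℝ]) (z : Fin n → ℂ) : Fin n → ℍ[ℝ] :=
  fun k => ((z k).re : ℍ[ℝ]) + (z k).im • I

/-- The slice `ℂ_I = {x + y I}` as a subset of the quaternions. -/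
def CI (I : ℍ[ℝ]) : Set ℍ[ℝ] := {p | ∃ x y : ℝ, p = (x : ℍ[ℝ]) + y • I}

/-- The weakly slice cone `ℍ_sⁿ = ⋃_{I ∈ 𝕊} ℂ_Iⁿ`. -/
def HSliceCone (n : ℕ) : Set (Fin n → ℍ[ℝ]) := ⋃ I ∈ SQ, Set.range (psi (n := n) I)

/-- Membership in `𝒫(ℂⁿ)`: continuous with real initial point. -/
def IsPathP {n : ℕ} (γ : PathC n) : Prop :=
  Continuous γ ∧ ∀ k, ((γ 0) k).im = 0

/-- `γ^I ⊂ Ω`. -/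
def pathInSlice {n : ℕ} (Ω : Set (Fin n → ℍ[ℝ])) (I : ℍ[ℝ]) (γ : PathC n) : Prop :=
  ∀ t, psi I (γ t) ∈ Ω

/-- `𝕊(Ω, γ) = {I ∈ 𝕊 : γ^I ⊂ Ω}`. -/
def SGamma {n : ℕ} (Ω : Set (Fin n → ℍ[ℝ])) (γ : PathC n) : Set ℍ[ℝ] :=
  {I | I ∈ SQ ∧ pathInSlice Ω I γ}

/-- `γ ∈ 𝒫(ℂⁿ, Ω)`. -/
def PathIn {n : ℕ} (Ω : Set (Fin n → ℍ[ℝ])) (γ : PathC n) : Prop :=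
  IsPathP γ ∧ ∃ I, I ∈ SGamma Ω γ

/-- `F` is a path-slice stem function of `f` on `Ω`. -/
def IsStem {n : ℕ} (Ω : Set (Fin n → ℍ[ℝ])) (f : (Fin n → ℍ[ℝ]) → ℍ[ℝ])
    (F : PathC n → ℍ[ℝ] × ℍ[ℝ]) : Prop :=
  ∀ γ, PathIn Ω γ → ∀ I ∈ SGamma Ω γ, f (psi I (γ 1)) = (F γ).1 + I * (F γ).2

/-- `f` is a path-slice function on `Ω`. -/
def PathSlice {n : ℕ} (Ω : Set (Fin n → ℍ[ℝ])) (f : (Fin n → ℍ[ℝ]) → ℍ[ℝ]) : Prop :=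
  ∃ F, IsStem Ω f F

/-- `Ω` is real-path-connected. -/
def RealPathConnected {n : ℕ} (Ω : Set (Fin n → ℍ[ℝ])) : Prop :=
  ∀ q ∈ Ω, ∃ γ : PathC n, PathIn Ω γ ∧ ∃ I ∈ SGamma Ω γ, psi I (γ 1) = q

/-- `Ω₂` is `Ω₁`-stem-preserving. -/
def StemPreserving {n : ℕ} (Ω₁ Ω₂ : Set (Fin n → ℍ[ℝ])) : Prop :=
  (∀ γ : PathC n, PathIn Ω₁ γ → (SGamma Ω₂ γ).Nontrivial) ∧
  (∀ α β : PathC n, PathIn Ω₁ α → PathIn Ω₁ β → α 1 = β 1 →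
    ¬ ∃ I, SGamma Ω₂ α ∩ SGamma Ω₂ β = {I})

/-- `Ω` is self-stem-preserving. -/
def SelfStemPreserving {n : ℕ} (Ω : Set (Fin n → ℍ[ℝ])) : Prop :=
  RealPathConnected Ω ∧ StemPreserving Ω Ω

/-- The map `𝕴 : ℍ_sⁿ → 𝕊 ∪ {0}`. -/
def frakI {n : ℕ} (q : Fin n → ℍ[ℝ]) : ℍ[ℝ] :=
  if h : ∀ k, IsRealQ (q k) then 0
  else
    let k := (Finset.univ.filter fun k => ¬ IsRealQ (q k)).min' (by
      push_neg at h
      obtain ⟨k, hk⟩ := h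
      exact ⟨k, Finset.mem_filter.mpr ⟨Finset.mem_univ k, hk⟩⟩)
    ‖q k - ((q k).re : ℍ[ℝ])‖⁻¹ • (q k - ((q k).re : ℍ[ℝ]))

/-- A choice of path-slice stem function of `f` (on paths in `Ω`); by
the results of Dou–Jin–Ren–Yang its restriction to `𝒫(ℂⁿ, Ω₁)` is the canonical `F^f_{Ω₁}`. -/
def stemOf {n : ℕ} (Ω : Set (Fin n → ℍ[ℝ])) (f : (Fin n → ℍ[ℝ]) → ℍ[ℝ]) :
    PathC n → ℍ[ℝ] × ℍ[ℝ] :=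
  Classical.epsilon (IsStem Ω f)

/-- The function `ℱ^f_{Ω₁} : Ω₁ → ℍ²` induced by the stem of `f` (path-slice on `Ω₂`). -/
def scrF {n : ℕ} (Ω₁ Ω₂ : Set (Fin n → ℍ[ℝ])) (f : (Fin n → ℍ[ℝ]) → ℍ[ℝ])
    (q : Fin n → ℍ[ℝ]) : ℍ[ℝ] × ℍ[ℝ] :=
  if ∀ k, IsRealQ (q k) then (f q, 0)
  else stemOf Ω₂ f (Classical.epsilon (fun γ : PathC n =>
    PathIn Ω₁ γ ∧ pathInSlice Ω₁ (frakI q) γ ∧ psi (frakI q) (γ 1) = q))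

/-- The `Ω₁`-slice conjugation `f^c_{Ω₁}`. -/
def sliceConj {n : ℕ} (Ω₁ Ω₂ : Set (Fin n → ℍ[ℝ])) (f : (Fin n → ℍ[ℝ]) → ℍ[ℝ]) :
    (Fin n → ℍ[ℝ]) → ℍ[ℝ] :=
  fun q => star (scrF Ω₁ Ω₂ f q).1 + frakI q * star (scrF Ω₁ Ω₂ f q).2

/-- The `*`-product `g * f` of a path-slice `g : Ω₁ → ℍ` with `f : Ω₂ → ℍ`. -/
def starProdF {n : ℕ} (Ω₁ Ω₂ : Set (Fin n → ℍ[ℝ])) (g f : (Fin n → ℍ[ℝ]) → ℍ[ℝ]) :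
    (Fin n → ℍ[ℝ]) → ℍ[ℝ] :=
  fun q => g q * (scrF Ω₁ Ω₂ f q).1 + frakI q * g q * (scrF Ω₁ Ω₂ f q).2

/-- The symmetrization `f^s_{Ω₁} = f^c_{Ω₁} * f`. -/
def symmF {n : ℕ} (Ω₁ Ω₂ : Set (Fin n → ℍ[ℝ])) (f : (Fin n → ℍ[ℝ]) → ℍ[ℝ]) :
    (Fin n → ℍ[ℝ]) → ℍ[ℝ] :=
  starProdF Ω₁ Ω₂ (sliceConj Ω₁ Ω₂ f) f

/-- The pointwise `*`-product on `ℍ²`. -/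
def starPair (p q : ℍ[ℝ] × ℍ[ℝ]) : ℍ[ℝ] × ℍ[ℝ] :=
  (p.1 * q.1 - p.2 * q.2, p.2 * q.1 + p.1 * q.2)

/-- Slice-open sets: every slice is open (pulled back to `ℂⁿ` via `Ψ_i^I`). -/
def SliceOpen {n : ℕ} (U : Set (Fin n → ℍ[ℝ])) : Prop :=
  ∀ I ∈ SQ, IsOpen {z : Fin n → ℂ | psi I z ∈ U}

/-- Weakly slice regular functions: each slice restriction is left `I`-holomorphic. -/
def SliceRegular {n : ℕ} (Ω : Set (Fin n → ℍ[ℝ])) (f : (Fin n → ℍ[ℝ]) → ℍ[ℝ]) : Prop :=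
  ∀ I ∈ SQ, ∀ z : Fin n → ℂ, psi I z ∈ Ω →
    DifferentiableWithinAt ℝ (fun w => f (psi I w)) {w | psi I w ∈ Ω} z ∧
    ∀ ℓ : Fin n,
      fderivWithin ℝ (fun w => f (psi I w)) {w | psi I w ∈ Ω} z (Pi.single ℓ 1)
        + I * fderivWithin ℝ (fun w => f (psi I w)) {w | psi I w ∈ Ω} z (Pi.single ℓ Complex.I)
        = 0

/-- The ball `B_I(q, r)` inside the slice `ℂ_Iⁿ`. -/
def BI {n : ℕ} (I : ℍ[ℝ]) (q : Fin n → ℍ[ℝ]) (r : ℝ) : Set (Fin n → ℍ[ℝ]) :=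
  {p | p ∈ Set.range (psi (n := n) I) ∧ dist p q < r}

/-- The slice topology. -/
def sliceTop (n : ℕ) : TopologicalSpace (Fin n → ℍ[ℝ]) where
  IsOpen := SliceOpen
  isOpen_univ := by intro I _; simpa using isOpen_univ
  isOpen_inter := by
    intro s t hs ht I hI
    have h : {z : Fin n → ℂ | psi I z ∈ s ∩ t}
        = {z : Fin n → ℂ | psi I z ∈ s} ∩ {z : Fin n → ℂ | psi I z ∈ t} := by
      ext z; simp [Set.mem_inter_iff]
    rw [h]
    exact (hs I hI).inter (ht I hI)
  isOpen_sUnion := by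
    intro S hS I hI
    have h : {z : Fin n → ℂ | psi I z ∈ ⋃₀ S} = ⋃ s ∈ S, {z : Fin n → ℂ | psi I z ∈ s} := by
      ext z; simp
    rw [h]
    exact isOpen_biUnion fun s hs => hS s hs I hI

/-- Slice-domains: nonempty slice-open sets connected in the slice topology. -/
def SliceDomain {n : ℕ} (Ω : Set (Fin n → ℍ[ℝ])) : Prop :=
  SliceOpen Ω ∧ @IsConnected _ (sliceTop n) Ω

/-- Concatenation `γ · ℒ_{γ(1)}^z` of a path with the segment from `γ(1)` to `z`. -/
def concatSeg {n : ℕ} (γ : PathC n) (z : Fin n → ℂ) : PathC n := fun t =>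
  if h : (t : ℝ) ≤ 1 / 2 then
    γ ⟨2 * (t : ℝ), ⟨by linarith [t.2.1], by linarith⟩⟩
  else
    (1 - (2 * (t : ℝ) - 1)) • γ 1 + (2 * (t : ℝ) - 1) • z

/-- The action of `σ` on `ℍ²`: `σ(p₁, p₂) = (-p₂, p₁)`. -/
def sigmaAct (p : ℍ[ℝ] × ℍ[ℝ]) : ℍ[ℝ] × ℍ[ℝ] := (-p.2, p.1)

/-- `F : 𝒫(ℂⁿ, Ω) → ℍ²` is holomorphic at the path `γ`. -/
def StemHoloAt {n : ℕ} (Ω : Set (Fin n → ℍ[ℝ])) (F : PathC n → ℍ[ℝ] × ℍ[ℝ])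
    (γ : PathC n) : Prop :=
  ∃ r > 0, (∀ z ∈ Metric.ball (γ 1) r, PathIn Ω (concatSeg γ z)) ∧
    ∀ z ∈ Metric.ball (γ 1) r,
      DifferentiableAt ℝ (fun w => F (concatSeg γ w)) z ∧
      ∀ ℓ : Fin n,
        fderiv ℝ (fun w => F (concatSeg γ w)) z (Pi.single ℓ 1)
          + sigmaAct (fderiv ℝ (fun w => F (concatSeg γ w)) z (Pi.single ℓ Complex.I)) = 0

/-- `F` is holomorphic (at every path of `𝒫(ℂⁿ, Ω)`). -/
def StemHolo {n : ℕ} (Ω : Set (Fin n → ℍ[ℝ])) (F : PathC n → ℍ[ℝ] × ℍ[ℝ]) : Prop :=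
  ∀ γ, PathIn Ω γ → StemHoloAt Ω F γ

/-- `E` is a complex-analytic subset of the open set `U ⊂ ℂⁿ`. -/
def IsComplexAnalyticSubset {n : ℕ} (U E : Set (Fin n → ℂ)) : Prop :=
  E ⊆ U ∧ ∀ z ∈ U, ∃ V, V ⊆ U ∧ IsOpen V ∧ z ∈ V ∧
    ∃ (m : ℕ) (h : Fin m → (Fin n → ℂ) → ℂ),
      (∀ j, DifferentiableOn ℂ (h j) V) ∧ E ∩ V = {w | w ∈ V ∧ ∀ j, h j w = 0}

/-- `A` is a path-slice analytic subset of the slice-domain `Ω`. -/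
def PathSliceAnalytic {n : ℕ} (Ω A : Set (Fin n → ℍ[ℝ])) : Prop :=
  A = Ω ∨ ∀ γ : PathC n, PathIn Ω γ →
    ∃ r > 0, ∃ rI : ℍ[ℝ] → ℝ, (∀ I ∈ SGamma Ω γ, rI I ∈ Set.Ioc (0 : ℝ) r) ∧
      ∃ E : Set (Fin n → ℂ), IsComplexAnalyticSubset (Metric.ball (γ 1) r) E ∧
        E ≠ Metric.ball (γ 1) r ∧
        ∀ I ∈ SGamma Ω γ, A ∩ BI I (psi I (γ 1)) (rI I) ⊆ psi I '' E

/-!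
Fix `z` with `Ψ_I(z) ∈ Ω₁`, a path `η` in the slice `I` of `Ω₁` from a real point to `z`, and two
units `J ≠ K` in `𝕊(Ω₂, η)`. For every path ending near `z` within these three slices, the stem
of `f` is the pair `(F₁, F₂)` solving `F₁ + J F₂ = f ∘ Ψ_J`, `F₁ + K F₂ = f ∘ Ψ_K`, and the
Cauchy–Riemann equations of `f` on the slices `J` and `K` turn into `∂ₓF + σ ∂ᵧF = 0`. Since `σ`
commutes with quaternionic conjugation, the conjugate stem satisfies the same equation, so
`f^c = F̄₁ + I F̄₂` is left `I`-holomorphic near `z`.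

That `f` has a stem at all is the representation formula `f ∘ Ψ_L = F₁ + L F₂`: the difference is
left `L`-holomorphic and vanishes on real points, hence along every path starting at a real point.
This identity theorem is reduced to complex-valued functions through the functionals
`p ↦ π p - π (L p) i`, and to one variable along complex lines.
-/

open Topology Filter Set

variable {n : ℕ}

section ImaginaryUnits

variable {I : ℍ[ℝ]}

theorem mul_self_of_mem_SQ (hI : I ∈ SQ) : I * I = -1 := by
  rw [← pow_two]; exact hI

theorem neg_mem_SQ (hI : I ∈ SQ) : -I ∈ SQ := by
  simpa [SQ] using hI

theorem norm_of_mem_SQ (hI : I ∈ SQ) : ‖I‖ = 1 := by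
  have h : ‖I‖ * ‖I‖ = 1 := by rw [← norm_mul, mul_self_of_mem_SQ hI, norm_neg, norm_one]
  nlinarith [norm_nonneg I]

theorem ne_zero_of_mem_SQ (hI : I ∈ SQ) : I ≠ 0 := by
  have h := norm_of_mem_SQ hI
  rintro rfl
  simp at h

theorem re_of_mem_SQ (hI : I ∈ SQ) : I.re = 0 := by
  have h : I ^ 2 = -1 := hI
  rw [← Quaternion.sq_eq_neg_normSq, h, Quaternion.normSq_eq_norm_mul_self, norm_of_mem_SQ hI]
  simp

theorem coe_add_smul_inj (hI : I ∈ SQ) {x y x' y' : ℝ}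
    (h : (x : ℍ[ℝ]) + y • I = (x' : ℍ[ℝ]) + y' • I) : x = x' ∧ y = y' := by
  have hx : x = x' := by simpa [re_of_mem_SQ hI] using congrArg QuaternionAlgebra.re h
  subst hx
  exact ⟨rfl, smul_left_injective ℝ (ne_zero_of_mem_SQ hI) (add_left_cancel h)⟩

end ImaginaryUnits

section Psi

variable {I : ℍ[ℝ]}

theorem psi_injective (hI : I ∈ SQ) : Function.Injective (psi (n := n) I) := fun _ _ h =>
  funext fun k => Complex.ext_iff.2 (coe_add_smul_inj hI (congrFun h k))

theorem psi_of_real {w : Fin n → ℂ} (hw : ∀ k, (w k).im = 0) (J : ℍ[ℝ]) :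
    psi I w = psi J w := by
  funext k; simp [psi, hw k]

theorem psi_neg_star (w : Fin n → ℂ) : psi (-I) (star w) = psi I w := by
  funext k; simp [psi]

theorem isRealQ_psi_iff (hI : I ∈ SQ) {w : Fin n → ℂ} {k : Fin n} :
    IsRealQ (psi I w k) ↔ (w k).im = 0 := by
  refine ⟨fun ⟨r, hr⟩ => (coe_add_smul_inj hI (x' := r) (y' := 0) (by simpa [psi] using hr)).2,
    fun h => ⟨(w k).re, by simp [psi, h]⟩⟩

theorem forall_isRealQ_psi_iff (hI : I ∈ SQ) {w : Fin n → ℂ} :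
    (∀ k, IsRealQ (psi I w k)) ↔ ∀ k, (w k).im = 0 :=
  forall_congr' fun _ => isRealQ_psi_iff hI

theorem frakI_of_forall_isRealQ {q : Fin n → ℍ[ℝ]} (h : ∀ k, IsRealQ (q k)) : frakI q = 0 :=
  dif_pos h

theorem frakI_psi (hI : I ∈ SQ) {w : Fin n → ℂ} (hw : ¬ ∀ k, (w k).im = 0) :
    frakI (psi I w) = I ∨ frakI (psi I w) = -I := by
  have hq : ¬ ∀ k, IsRealQ (psi I w k) := (forall_isRealQ_psi_iff hI).not.2 hw
  rw [frakI, dif_neg hq]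
  generalize_proofs hne
  set k := (Finset.univ.filter fun k => ¬ IsRealQ (psi I w k)).min' hne
  have hk : (w k).im ≠ 0 :=
    (isRealQ_psi_iff hI).not.1 (Finset.mem_filter.1 (Finset.min'_mem _ hne)).2
  have hpure : psi I w k - ((psi I w k).re : ℍ[ℝ]) = (w k).im • I := by
    simp [psi, re_of_mem_SQ hI]
  simp only [hpure, norm_smul, norm_of_mem_SQ hI, mul_one, Real.norm_eq_abs, smul_smul]
  rcases hk.lt_or_gt with hneg | hpos
  · right; rw [abs_of_neg hneg, inv_neg, neg_mul, inv_mul_cancel₀ hk, neg_one_smul]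
  · left; rw [abs_of_pos hpos, inv_mul_cancel₀ hk, one_smul]

theorem psi_eq_psi {I' : ℍ[ℝ]} (hI : I ∈ SQ) (hI' : I' ∈ SQ) {w w' : Fin n → ℂ}
    (h : psi I' w' = psi I w) (hw : ¬ ∀ k, (w k).im = 0) :
    (I' = I ∧ w' = w) ∨ (I' = -I ∧ w' = star w) := by
  have hw' : ¬ ∀ k, (w' k).im = 0 := by
    rwa [← forall_isRealQ_psi_iff hI', h, forall_isRealQ_psi_iff hI]
  -- `𝕴` of the common point is both `±I` and `±I'`
  have hI'I : I' = I ∨ I' = -I := by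
    rcases frakI_psi hI hw with e | e <;> rcases frakI_psi hI' hw' with e' | e' <;>
      rw [h, e] at e' <;> grind
  rcases hI'I with rfl | rfl
  · exact Or.inl ⟨rfl, psi_injective hI h⟩
  · exact Or.inr ⟨rfl, psi_injective (neg_mem_SQ hI) (by rw [h, psi_neg_star])⟩

end Psi

section StemAlgebra

variable {D : Type*} [DivisionRing D] {J K : D}

theorem prod_eq_of_fst_add_mul_snd_eq (hJK : J ≠ K) {p q : D × D}
    (hJ : p.1 + J * p.2 = q.1 + J * q.2) (hK : p.1 + K * p.2 = q.1 + K * q.2) : p = q := by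
  have h2 : (J - K) * (p.2 - q.2) = 0 := by
    rw [sub_mul, mul_sub, mul_sub]
    linear_combination (norm := abel) hJ - hK
  have h2' : p.2 = q.2 := sub_eq_zero.1 ((mul_eq_zero.1 h2).resolve_left (sub_ne_zero.2 hJK))
  exact Prod.ext (by rwa [h2', add_left_inj] at hJ) h2'

/-- The unique pair `p` with `p.1 + J * p.2 = a` and `p.1 + K * p.2 = b` (for `J ≠ K`). -/
def solveStem (J K a b : D) : D × D :=
  (a - J * ((J - K)⁻¹ * (a - b)), (J - K)⁻¹ * (a - b))

theorem solveStem_fst_add_mul_snd_left (a b : D) :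
    (solveStem J K a b).1 + J * (solveStem J K a b).2 = a := by
  simp [solveStem]

theorem solveStem_fst_add_mul_snd_right (hJK : J ≠ K) (a b : D) :
    (solveStem J K a b).1 + K * (solveStem J K a b).2 = b := by
  have h : (J - K) * (J - K)⁻¹ = 1 := mul_inv_cancel₀ (sub_ne_zero.2 hJK)
  simp only [solveStem, ← mul_assoc, sub_add, ← sub_mul]
  rw [h, one_mul, sub_sub_cancel]

theorem eq_solveStem (hJK : J ≠ K) {p : D × D} {a b : D} (hJ : p.1 + J * p.2 = a)
    (hK : p.1 + K * p.2 = b) : p = solveStem J K a b :=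
  prod_eq_of_fst_add_mul_snd_eq hJK (hJ.trans (solveStem_fst_add_mul_snd_left a b).symm)
    (hK.trans (solveStem_fst_add_mul_snd_right hJK a b).symm)

theorem solveStem_self (a : D) : solveStem J K a a = (a, 0) := by
  simp [solveStem]

theorem solveStem_neg (a b : D) :
    solveStem (-J) (-K) a b = ((solveStem J K a b).1, -(solveStem J K a b).2) := by
  rw [solveStem, solveStem, show -J - -K = -(J - K) by abel, inv_neg]
  simp

end StemAlgebra

section SigmaAct

variable {L : ℍ[ℝ]}

theorem sigmaAct_fst_add_mul_snd (hL : L * L = -1) (p : ℍ[ℝ] × ℍ[ℝ]) :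
    (sigmaAct p).1 + L * (sigmaAct p).2 = L * (p.1 + L * p.2) := by
  simp [sigmaAct, mul_add, ← mul_assoc, hL, add_comm]

theorem fst_add_mul_snd_add_sigmaAct (hL : L * L = -1) (p p' : ℍ[ℝ] × ℍ[ℝ]) :
    (p + sigmaAct p').1 + L * (p + sigmaAct p').2
      = (p.1 + L * p.2) + L * (p'.1 + L * p'.2) := by
  rw [← sigmaAct_fst_add_mul_snd hL, Prod.fst_add, Prod.snd_add, mul_add]
  abel

theorem solveStem_add_sigmaAct {J K : ℍ[ℝ]} (hJ : J * J = -1) (hK : K * K = -1) (hJK : J ≠ K)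
    {a a' b b' : ℍ[ℝ]} (ha : a + J * a' = 0) (hb : b + K * b' = 0) :
    solveStem J K a b + sigmaAct (solveStem J K a' b') = 0 := by
  -- the `J`- and `K`-equations of `p + σ p'` have right-hand sides `a + J a'` and `b + K b'`
  refine prod_eq_of_fst_add_mul_snd_eq hJK ?_ ?_ <;>
    simp only [fst_add_mul_snd_add_sigmaAct hJ, fst_add_mul_snd_add_sigmaAct hK,
      solveStem_fst_add_mul_snd_left, solveStem_fst_add_mul_snd_right hJK, Prod.fst_zero,
      Prod.snd_zero, mul_zero, add_zero, ha, hb]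

theorem star_sigmaAct (p : ℍ[ℝ] × ℍ[ℝ]) : star (sigmaAct p) = sigmaAct (star p) := by
  simp [sigmaAct, Prod.ext_iff]

end SigmaAct

instance : StarModule ℝ ℍ[ℝ] := ⟨Quaternion.star_smul⟩

section Holomorphy

variable {E : Type*} [NormedAddCommGroup E] [NormedSpace ℂ E]

/-- Coordinate-free left `L`-holomorphy; on `ℂⁿ` it amounts to `(∂/∂x_ℓ + L ∂/∂y_ℓ) g = 0` for
all `ℓ` (`add_mul_I_smul_eq_zero_of_single`). -/
def LeftHolomorphicAt (L : ℍ[ℝ]) (g : E → ℍ[ℝ]) (z : E) : Prop :=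
  ∃ D : E →L[ℝ] ℍ[ℝ], HasFDerivAt g D z ∧ ∀ v, D v + L * D (Complex.I • v) = 0

/-- Pointwise form of `StemHoloAt`, for a stem regarded as a function of the endpoint. -/
def StemHolomorphicAt (P : E → ℍ[ℝ] × ℍ[ℝ]) (z : E) : Prop :=
  ∃ D : E →L[ℝ] ℍ[ℝ] × ℍ[ℝ], HasFDerivAt P D z ∧ ∀ v, D v + sigmaAct (D (Complex.I • v)) = 0

variable {L : ℍ[ℝ]} {g g' : E → ℍ[ℝ]} {P : E → ℍ[ℝ] × ℍ[ℝ]} {z : E}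

theorem LeftHolomorphicAt.sub (hg : LeftHolomorphicAt L g z) (hg' : LeftHolomorphicAt L g' z) :
    LeftHolomorphicAt L (fun w => g w - g' w) z := by
  obtain ⟨D, hD, hcr⟩ := hg
  obtain ⟨D', hD', hcr'⟩ := hg'
  refine ⟨D - D', hD.sub hD', fun v => ?_⟩
  simp only [sub_apply, mul_sub]
  linear_combination (norm := abel) hcr v - hcr' v

theorem LeftHolomorphicAt.congr_of_eventuallyEq (hg : LeftHolomorphicAt L g z)
    (h : g' =ᶠ[𝓝 z] g) : LeftHolomorphicAt L g' z :=
  let ⟨D, hD, hcr⟩ := hg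
  ⟨D, hD.congr_of_eventuallyEq h, hcr⟩

theorem StemHolomorphicAt.star (hP : StemHolomorphicAt P z) :
    StemHolomorphicAt (fun w => star (P w)) z := by
  obtain ⟨D, hD, hcr⟩ := hP
  refine ⟨_, hD.star, fun v => ?_⟩
  simp only [ContinuousLinearMap.comp_apply, ContinuousLinearEquiv.coe_coe, starL'_apply,
    ← star_sigmaAct, ← star_add, hcr, star_zero]

theorem StemHolomorphicAt.leftHolomorphicAt (hP : StemHolomorphicAt P z) (hL : L * L = -1) :
    LeftHolomorphicAt L (fun w => (P w).1 + L * (P w).2) z := by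
  obtain ⟨D, hD, hcr⟩ := hP
  refine ⟨_, hD.fst.add (hD.snd.const_mul L), fun v => ?_⟩
  simpa [← fst_add_mul_snd_add_sigmaAct hL] using congrArg (fun p => p.1 + L * p.2) (hcr v)

theorem stemHolomorphicAt_solveStem {J K : ℍ[ℝ]} (hJ : J * J = -1) (hK : K * K = -1)
    (hJK : J ≠ K) {gJ gK : E → ℍ[ℝ]} (hgJ : LeftHolomorphicAt J gJ z)
    (hgK : LeftHolomorphicAt K gK z) :
    StemHolomorphicAt (fun w => solveStem J K (gJ w) (gK w)) z := by
  obtain ⟨DJ, hDJ, hcrJ⟩ := hgJ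
  obtain ⟨DK, hDK, hcrK⟩ := hgK
  have h2 := (hDJ.sub hDK).const_mul (J - K)⁻¹
  refine ⟨_, (hDJ.sub (h2.const_mul J)).prodMk h2, fun v => ?_⟩
  exact solveStem_add_sigmaAct hJ hK hJK (hcrJ v) (hcrK v)

end Holomorphy

section IdentityTheorem

variable {E F : Type*} [NormedAddCommGroup E] [NormedSpace ℂ E]
  [NormedAddCommGroup F] [NormedSpace ℂ F]

theorem HasFDerivAt.differentiableAt_complex {G : E → F} {D : E →L[ℝ] F} {z : E}
    (hG : HasFDerivAt G D z) (hD : ∀ v, D (Complex.I • v) = Complex.I • D v) :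
    DifferentiableAt ℂ G z := by
  let Dℂ : E →L[ℂ] F :=
    { D with
      map_smul' := fun c v => by
        have hc : c • v = c.re • v + c.im • Complex.I • v := by
          rw [← Complex.coe_smul, ← Complex.coe_smul, smul_smul, ← add_smul, Complex.re_add_im]
        have hc' : c • D v = c.re • D v + c.im • Complex.I • D v := by
          rw [← Complex.coe_smul, ← Complex.coe_smul, smul_smul, ← add_smul, Complex.re_add_im]
        simp only [AddHom.toFun_eq_coe, LinearMap.coe_toAddHom, ContinuousLinearMap.coe_coe,
          RingHom.id_apply, hc, hc', map_add, map_smul, hD] }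
  exact (hasFDerivAt_of_restrictScalars ℝ hG rfl : HasFDerivAt G Dℂ z).differentiableAt

variable [CompleteSpace F]

theorem DifferentiableOn.eqOn_zero_of_convex {G : E → F} {S : Set E} (hG : DifferentiableOn ℂ G S)
    (hS : IsOpen S) (hSc : Convex ℝ S) {c : E} (hc : c ∈ S) (h0 : G =ᶠ[𝓝 c] 0) :
    EqOn G 0 S := by
  intro w hw
  let a : ℂ → E := fun ζ => c + ζ • (w - c)
  have ha : Differentiable ℂ a := by fun_prop
  have hV : Convex ℝ (a ⁻¹' S) :=
    (hSc.translate_preimage_right c).linear_preimage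
      ((LinearMap.toSpanSingleton ℂ E (w - c)).restrictScalars ℝ)
  have hφ := (hG.comp ha.differentiableOn fun _ h => h).analyticOnNhd (hS.preimage ha.continuous)
  have ha0 : a 0 = c := by simp [a]
  have hφ0 : G ∘ a =ᶠ[𝓝 0] 0 := by
    simpa using h0.comp_tendsto (ha0 ▸ ha.continuous.tendsto 0)
  have := hφ.eqOn_zero_of_preconnected_of_eventuallyEq_zero hV.isPreconnected
    (show a 0 ∈ S from ha0 ▸ hc) hφ0 (show a 1 ∈ S by simpa [a] using hw)
  simpa [a] using this

theorem DifferentiableOn.eqOn_zero_of_isPreconnected {G : E → F} {U s : Set E}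
    (hG : DifferentiableOn ℂ G U) (hU : IsOpen U) (hs : IsPreconnected s) (hsU : s ⊆ U) {x : E}
    (hx : x ∈ s) (h0 : G =ᶠ[𝓝 x] 0) : EqOn G 0 s := by
  have hsub : s ⊆ {z | G =ᶠ[𝓝 z] 0} := by
    refine hs.subset_of_closure_inter_subset isOpen_setOfPred_eventually_nhds ⟨x, hx, h0⟩ ?_
    rintro z ⟨hzc, hzs⟩
    obtain ⟨ε, hε, hball⟩ := Metric.isOpen_iff.1 hU z (hsU hzs)
    obtain ⟨z', hz', hz'0⟩ := mem_closure_iff_nhds.1 hzc _ (Metric.ball_mem_nhds z hε)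
    exact ((hG.mono hball).eqOn_zero_of_convex Metric.isOpen_ball (convex_ball z ε) hz'
      hz'0).eventuallyEq_of_mem (Metric.ball_mem_nhds z hε)
  exact fun y hy => (hsub hy).eq_of_nhds

theorem DifferentiableOn.eqOn_zero_ball_of_real {φ : ℂ → F} {x : ℂ} {R : ℝ}
    (hφ : DifferentiableOn ℂ φ (Metric.ball x R)) (hx : x.im = 0)
    (hreal : ∀ t : ℝ, (t : ℂ) ∈ Metric.ball x R → φ t = 0) : EqOn φ 0 (Metric.ball x R) := by
  intro w hw
  obtain ⟨r, rfl⟩ : ∃ r : ℝ, (r : ℂ) = x := ⟨x.re, Complex.ext rfl (by simp [hx])⟩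
  have hxball : (r : ℂ) ∈ Metric.ball (r : ℂ) R := Metric.mem_ball_self (Metric.pos_of_mem_ball hw)
  have hnear : ∀ᶠ t : ℝ in 𝓝[≠] r, φ t = 0 :=
    Filter.Eventually.filter_mono nhdsWithin_le_nhds <|
      Filter.mem_of_superset (Complex.continuous_ofReal.continuousAt.preimage_mem_nhds
        (Metric.isOpen_ball.mem_nhds hxball)) hreal
  have htends : Tendsto ((↑) : ℝ → ℂ) (𝓝[≠] r) (𝓝[≠] (r : ℂ)) :=
    tendsto_nhdsWithin_of_tendsto_nhds_of_eventually_within _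
      Complex.continuous_ofReal.continuousWithinAt.tendsto
      (eventually_nhdsWithin_of_forall fun _ ht => Complex.ofReal_injective.ne ht)
  exact (hφ.analyticOnNhd Metric.isOpen_ball).eqOn_zero_of_preconnected_of_frequently_eq_zero
    (convex_ball _ R).isPreconnected hxball (htends.frequently hnear.frequently) hw

theorem DifferentiableOn.eqOn_zero_ball_pi_of_real {G : (Fin n → ℂ) → F}
    {c : Fin n → ℂ} {R : ℝ} (hG : DifferentiableOn ℂ G (Metric.ball c R)) (hc : ∀ k, (c k).im = 0)
    (hreal : ∀ w ∈ Metric.ball c R, (∀ k, (w k).im = 0) → G w = 0) :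
    EqOn G 0 (Metric.ball c R) := by
  intro w hw
  have hR := Metric.pos_of_mem_ball hw
  suffices h : ∀ s : Finset (Fin n), ∀ w ∈ Metric.ball c R, (∀ k ∉ s, (w k).im = 0) → G w = 0 from
    h Finset.univ w hw (by simp)
  -- make the coordinates in `s` complex one at a time, by the one-variable case along lines
  intro s
  induction s using Finset.induction_on with
  | empty => exact fun w hw hws => hreal w hw fun k => hws k (Finset.notMem_empty k)
  | insert ℓ s _ ih =>
    intro w hw hws
    have hupd : ∀ ζ ∈ Metric.ball (c ℓ) R, Function.update w ℓ ζ ∈ Metric.ball c R := by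
      rw [ball_pi _ hR] at hw ⊢
      exact fun ζ hζ => (Set.update_mem_pi_iff_of_mem hw).2 fun _ => hζ
    have hline : DifferentiableOn ℂ (fun ζ => G (Function.update w ℓ ζ)) (Metric.ball (c ℓ) R) :=
      hG.comp (fun ζ _ => (hasFDerivAt_update w ζ).differentiableAt.differentiableWithinAt) hupd
    have hwℓ : w ℓ ∈ Metric.ball (c ℓ) R := by
      rw [ball_pi _ hR] at hw; exact hw ℓ trivial
    have := hline.eqOn_zero_ball_of_real (hc ℓ) (fun t ht => ih _ (hupd _ ht) fun k hk => by
      by_cases hkℓ : k = ℓ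
      · subst hkℓ; simp
      · rw [Function.update_of_ne hkℓ]; exact hws k (by simp [hk, hkℓ])) hwℓ
    simpa using this

end IdentityTheorem

section QuaternionicIdentityTheorem

/-- For `L² = -1`, a real functional `π` on `ℍ` induces `p ↦ π p - π (L p) i`, which turns left
multiplication by `L` into multiplication by `i`. -/
def dualToComplex (L : ℍ[ℝ]) (π : Module.Dual ℝ ℍ[ℝ]) : ℍ[ℝ] →L[ℝ] ℂ :=
  LinearMap.toContinuousLinearMap
    { toFun := fun p => ⟨π p, -π (L * p)⟩
      map_add' := fun p q => by apply Complex.ext <;> simp [mul_add]; ring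
      map_smul' := fun r p => by apply Complex.ext <;> simp }

theorem dualToComplex_apply (L : ℍ[ℝ]) (π : Module.Dual ℝ ℍ[ℝ]) (p : ℍ[ℝ]) :
    dualToComplex L π p = ⟨π p, -π (L * p)⟩ := rfl

theorem dualToComplex_mul {L : ℍ[ℝ]} (hL : L * L = -1) (π : Module.Dual ℝ ℍ[ℝ]) (p : ℍ[ℝ]) :
    dualToComplex L π (L * p) = Complex.I * dualToComplex L π p := by
  apply Complex.ext <;> simp [dualToComplex_apply, ← mul_assoc, hL]

variable {E : Type*} [NormedAddCommGroup E] [NormedSpace ℂ E]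

theorem LeftHolomorphicAt.differentiableAt_dualToComplex {L : ℍ[ℝ]} (hL : L * L = -1)
    {g : E → ℍ[ℝ]} {z : E} (hg : LeftHolomorphicAt L g z) (π : Module.Dual ℝ ℍ[ℝ]) :
    DifferentiableAt ℂ (fun w => dualToComplex L π (g w)) z := by
  obtain ⟨D, hD, hcr⟩ := hg
  refine ((dualToComplex L π).hasFDerivAt.comp z hD).differentiableAt_complex fun v => ?_
  have hv : D (Complex.I • v) = L * D v := by
    rw [eq_neg_of_add_eq_zero_left (hcr v), mul_neg, ← mul_assoc, hL, neg_one_mul, neg_neg]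
  simp [hv, dualToComplex_mul hL]

theorem eq_zero_of_leftHolomorphicAt {U : Set (Fin n → ℂ)} (hU : IsOpen U) {L : ℍ[ℝ]}
    (hL : L * L = -1) {g : (Fin n → ℂ) → ℍ[ℝ]} (hg : ∀ z ∈ U, LeftHolomorphicAt L g z)
    (hreal : ∀ w ∈ U, (∀ k, (w k).im = 0) → g w = 0) {s : Set (Fin n → ℂ)}
    (hs : IsPreconnected s) (hsU : s ⊆ U) {x : Fin n → ℂ} (hx : x ∈ s) (hxr : ∀ k, (x k).im = 0)
    {y : Fin n → ℂ} (hy : y ∈ s) : g y = 0 := by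
  refine (Module.forall_dual_apply_eq_zero_iff ℝ _).1 fun π => ?_
  set G := fun w => dualToComplex L π (g w)
  have hG : DifferentiableOn ℂ G U := fun z hz =>
    ((hg z hz).differentiableAt_dualToComplex hL π).differentiableWithinAt
  obtain ⟨R, hR, hball⟩ := Metric.isOpen_iff.1 hU x (hsU hx)
  have hx0 : G =ᶠ[𝓝 x] 0 :=
    ((hG.mono hball).eqOn_zero_ball_pi_of_real hxr fun w hw hwr => by
      simp [G, hreal w (hball hw) hwr]).eventuallyEq_of_mem (Metric.ball_mem_nhds x hR)
  simpa [G, dualToComplex_apply] using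
    congrArg Complex.re (hG.eqOn_zero_of_isPreconnected hU hs hsU hx hx0 hy)

end QuaternionicIdentityTheorem

section SliceRegular

variable {Ω : Set (Fin n → ℍ[ℝ])} {f : (Fin n → ℍ[ℝ]) → ℍ[ℝ]}

theorem add_mul_I_smul_eq_zero_of_single {L : ℍ[ℝ]} (hL : L * L = -1)
    {D : (Fin n → ℂ) →L[ℝ] ℍ[ℝ]}
    (h : ∀ ℓ, D (Pi.single ℓ 1) + L * D (Pi.single ℓ Complex.I) = 0) (v : Fin n → ℂ) :
    D v + L * D (Complex.I • v) = 0 := by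
  let Φ : (Fin n → ℂ) →ₗ[ℝ] ℍ[ℝ] := D.toLinearMap + LinearMap.mulLeft ℝ L ∘ₗ D.toLinearMap ∘ₗ
    (LinearMap.lsmul ℂ (Fin n → ℂ) Complex.I).restrictScalars ℝ
  suffices hΦ : Φ = 0 from LinearMap.congr_fun hΦ v
  refine (Pi.basis fun _ : Fin n => Complex.basisOneI).ext fun ⟨ℓ, j⟩ => ?_
  have hI : Complex.I • (Pi.single ℓ Complex.I : Fin n → ℂ) = -Pi.single ℓ 1 := by
    rw [← Pi.single_smul', smul_eq_mul, Complex.I_mul_I, Pi.single_neg]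
  have hLD : L * D (Pi.single ℓ 1) = D (Pi.single ℓ Complex.I) := by
    rw [eq_neg_of_add_eq_zero_left (h ℓ), mul_neg, ← mul_assoc, hL, neg_one_mul, neg_neg]
  fin_cases j
  · simpa [Φ, ← Pi.single_smul'] using h ℓ
  · simp [Φ, hI, hLD]

theorem SliceRegular.leftHolomorphicAt (hf : SliceRegular Ω f) (ho : SliceOpen Ω) {I : ℍ[ℝ]}
    (hI : I ∈ SQ) {z : Fin n → ℂ} (hz : psi I z ∈ Ω) :
    LeftHolomorphicAt I (fun w => f (psi I w)) z := by
  obtain ⟨hd, hcr⟩ := hf I hI z hz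
  have hopen : {w | psi I w ∈ Ω} ∈ 𝓝 z := (ho I hI).mem_nhds hz
  refine ⟨_, (hd.differentiableAt hopen).hasFDerivAt,
    add_mul_I_smul_eq_zero_of_single (mul_self_of_mem_SQ hI) fun ℓ => ?_⟩
  simpa only [fderivWithin_of_mem_nhds hopen] using hcr ℓ

theorem sliceRegular_of_leftHolomorphicAt (ho : SliceOpen Ω)
    (h : ∀ I ∈ SQ, ∀ z, psi I z ∈ Ω → LeftHolomorphicAt I (fun w => f (psi I w)) z) :
    SliceRegular Ω f := by
  intro I hI z hz
  obtain ⟨D, hD, hcr⟩ := h I hI z hz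
  refine ⟨hD.differentiableAt.differentiableWithinAt, fun ℓ => ?_⟩
  rw [fderivWithin_of_mem_nhds ((ho I hI).mem_nhds hz), hD.fderiv]
  simpa [← Pi.single_smul'] using hcr (Pi.single ℓ 1)

theorem SliceRegular.eq_solveStem (hf : SliceRegular Ω f) (ho : SliceOpen Ω) {γ : PathC n}
    (hγ : IsPathP γ) {J K L : ℍ[ℝ]} (hJ : J ∈ SGamma Ω γ) (hK : K ∈ SGamma Ω γ)
    (hL : L ∈ SGamma Ω γ) (hJK : J ≠ K) :
    f (psi L (γ 1)) = (solveStem J K (f (psi J (γ 1))) (f (psi K (γ 1)))).1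
      + L * (solveStem J K (f (psi J (γ 1))) (f (psi K (γ 1)))).2 := by
  set P := fun w => solveStem J K (f (psi J w)) (f (psi K w))
  let U := {w | psi J w ∈ Ω} ∩ {w | psi K w ∈ Ω} ∩ {w | psi L w ∈ Ω}
  have hU : IsOpen U := ((ho J hJ.1).inter (ho K hK.1)).inter (ho L hL.1)
  have hg : ∀ z ∈ U, LeftHolomorphicAt L (fun w => f (psi L w) - ((P w).1 + L * (P w).2)) z :=
    fun z ⟨⟨hzJ, hzK⟩, hzL⟩ => (hf.leftHolomorphicAt ho hL.1 hzL).sub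
      ((stemHolomorphicAt_solveStem (mul_self_of_mem_SQ hJ.1) (mul_self_of_mem_SQ hK.1) hJK
        (hf.leftHolomorphicAt ho hJ.1 hzJ) (hf.leftHolomorphicAt ho hK.1 hzK)).leftHolomorphicAt
          (mul_self_of_mem_SQ hL.1))
  have hreal : ∀ w ∈ U, (∀ k, (w k).im = 0) → f (psi L w) - ((P w).1 + L * (P w).2) = 0 :=
    fun w _ hw => by simp [P, psi_of_real hw J (I := K), psi_of_real hw J (I := L), solveStem_self]
  have hrange : range γ ⊆ U := range_subset_iff.2 fun t => ⟨⟨hJ.2 t, hK.2 t⟩, hL.2 t⟩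
  exact sub_eq_zero.1 (eq_zero_of_leftHolomorphicAt hU (mul_self_of_mem_SQ hL.1) hg hreal
    (isPreconnected_range hγ.1) hrange (mem_range_self 0) hγ.2 (mem_range_self 1))

theorem SliceRegular.pathSlice (hf : SliceRegular Ω f) (ho : SliceOpen Ω) : PathSlice Ω f := by
  have h : ∀ γ, PathIn Ω γ →
      ∃ p : ℍ[ℝ] × ℍ[ℝ], ∀ L ∈ SGamma Ω γ, f (psi L (γ 1)) = p.1 + L * p.2 := by
    rintro γ ⟨hγ, J, hJ⟩
    rcases (SGamma Ω γ).subsingleton_or_nontrivial with hs | ⟨J, hJ, K, hK, hJK⟩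
    · exact ⟨(f (psi J (γ 1)), 0), fun L hL => by simp [hs hL hJ]⟩
    · exact ⟨_, fun L hL => hf.eq_solveStem ho hγ hJ hK hL hJK⟩
  choose! F hF using h
  exact ⟨F, hF⟩

end SliceRegular

section Paths

variable {Ω : Set (Fin n → ℍ[ℝ])} {J : ℍ[ℝ]} {γ δ : PathC n}

def IsPathP.toPath (hγ : IsPathP γ) : Path (γ 0) (γ 1) where
  toFun := γ
  continuous_toFun := hγ.1
  source' := rfl
  target' := rfl

@[simp]
theorem IsPathP.coe_toPath (hγ : IsPathP γ) : ⇑hγ.toPath = γ := rfl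

theorem isPathP_of_path {x y : Fin n → ℂ} (p : Path x y) (hx : ∀ k, (x k).im = 0) :
    IsPathP ⇑p :=
  ⟨p.continuous, by rwa [p.source]⟩

theorem IsPathP.star (hγ : IsPathP γ) : IsPathP (star γ) :=
  ⟨hγ.1.star, fun k => by simp [hγ.2 k]⟩

theorem IsPathP.exists_extend (hγ : IsPathP γ) {S : Set (Fin n → ℂ)} (hS : Convex ℝ S)
    (h1 : γ 1 ∈ S) {w : Fin n → ℂ} (hw : w ∈ S) :
    ∃ δ : PathC n, IsPathP δ ∧ δ 1 = w ∧ range δ ⊆ range γ ∪ S := by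
  obtain ⟨p, hp⟩ := (hS.isPathConnected ⟨_, h1⟩).joinedIn _ h1 w hw
  refine ⟨hγ.toPath.trans p, isPathP_of_path _ hγ.2, Path.target _, ?_⟩
  rw [Path.trans_range, hγ.coe_toPath]
  exact union_subset_union_right _ (range_subset_iff.2 hp)

theorem pathInSlice_iff_range_subset : pathInSlice Ω J γ ↔ range γ ⊆ psi J ⁻¹' Ω := by
  rw [range_subset_iff]; rfl

theorem SGamma_anti (h : range γ ⊆ range δ) : SGamma Ω δ ⊆ SGamma Ω γ := fun _ hJ =>
  ⟨hJ.1, pathInSlice_iff_range_subset.2 (h.trans (pathInSlice_iff_range_subset.1 hJ.2))⟩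

theorem mem_SGamma_of_range_subset (hJ : J ∈ SGamma Ω γ) {S : Set (Fin n → ℂ)}
    (hδ : range δ ⊆ range γ ∪ S) (hS : S ⊆ psi J ⁻¹' Ω) : J ∈ SGamma Ω δ :=
  ⟨hJ.1, pathInSlice_iff_range_subset.2
    (hδ.trans (union_subset (pathInSlice_iff_range_subset.1 hJ.2) hS))⟩

theorem pathInSlice.star (h : pathInSlice Ω J γ) : pathInSlice Ω (-J) (star γ) := fun t => by
  rw [Pi.star_apply, psi_neg_star]; exact h t

theorem neg_mem_SGamma_star (hJ : J ∈ SGamma Ω γ) : -J ∈ SGamma Ω (star γ) :=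
  ⟨neg_mem_SQ hJ.1, hJ.2.star⟩

theorem RealPathConnected.exists_pathInSlice (hΩ : RealPathConnected Ω) {I : ℍ[ℝ]} (hI : I ∈ SQ)
    {z : Fin n → ℂ} (hz : psi I z ∈ Ω) :
    ∃ γ : PathC n, IsPathP γ ∧ pathInSlice Ω I γ ∧ γ 1 = z := by
  by_cases hreal : ∀ k, (z k).im = 0
  · exact ⟨fun _ => z, ⟨continuous_const, hreal⟩, fun _ => hz, rfl⟩
  obtain ⟨γ, ⟨hγ, -⟩, I', hI', hend⟩ := hΩ _ hz
  rcases psi_eq_psi hI hI'.1 hend hreal with ⟨rfl, h1⟩ | ⟨rfl, h1⟩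
  · exact ⟨γ, hγ, hI'.2, h1⟩
  · exact ⟨star γ, hγ.star, neg_neg I ▸ hI'.2.star, by simp [h1]⟩

end Paths

section Stem

variable {Ω Ω₁ Ω₂ : Set (Fin n → ℍ[ℝ])} {f : (Fin n → ℍ[ℝ]) → ℍ[ℝ]}
  {F : PathC n → ℍ[ℝ] × ℍ[ℝ]} {γ : PathC n} {J K : ℍ[ℝ]}

theorem IsStem.apply_eq_solveStem (hF : IsStem Ω f F) (hγ : IsPathP γ) (hJ : J ∈ SGamma Ω γ)
    (hK : K ∈ SGamma Ω γ) (hJK : J ≠ K) :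
    F γ = solveStem J K (f (psi J (γ 1))) (f (psi K (γ 1))) :=
  eq_solveStem hJK (hF γ ⟨hγ, J, hJ⟩ J hJ).symm (hF γ ⟨hγ, J, hJ⟩ K hK).symm

theorem IsStem.apply_of_real (hF : IsStem Ω f F) (hγ : IsPathP γ) (hJ : J ∈ SGamma Ω γ)
    (hK : K ∈ SGamma Ω γ) (hJK : J ≠ K) (hreal : ∀ k, (γ 1 k).im = 0) :
    F γ = (f (psi J (γ 1)), 0) := by
  rw [hF.apply_eq_solveStem hγ hJ hK hJK, psi_of_real hreal J (I := K), solveStem_self]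

theorem IsStem.apply_star (hF : IsStem Ω f F) (hγ : IsPathP γ) (hJ : J ∈ SGamma Ω γ)
    (hK : K ∈ SGamma Ω γ) (hJK : J ≠ K) : F (star γ) = ((F γ).1, -(F γ).2) := by
  rw [hF.apply_eq_solveStem hγ.star (neg_mem_SGamma_star hJ) (neg_mem_SGamma_star hK)
    (neg_injective.ne hJK), hF.apply_eq_solveStem hγ hJ hK hJK, Pi.star_apply, psi_neg_star,
    psi_neg_star, solveStem_neg]

/-- Concatenating one path with the reverse of the other gives a path in `Ω₁`, along which `Ω₂`
has two common imaginary units. -/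
theorem IsStem.eq_of_pathInSlice (hF : IsStem Ω₂ f F)
    (hsp1 : ∀ γ : PathC n, PathIn Ω₁ γ → (SGamma Ω₂ γ).Nontrivial) {α β : PathC n}
    (hα : IsPathP α) (hβ : IsPathP β) (hJ : J ∈ SQ) (hαJ : pathInSlice Ω₁ J α)
    (hβJ : pathInSlice Ω₁ J β) (hend : α 1 = β 1) : F α = F β := by
  let δ := hα.toPath.trans (hβ.toPath.symm.cast hend rfl)
  have hδ : range δ = range α ∪ range β := by
    simp [δ, Path.trans_range, Path.symm_range]
  have hδJ : pathInSlice Ω₁ J δ := pathInSlice_iff_range_subset.2 <| hδ ▸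
    union_subset (pathInSlice_iff_range_subset.1 hαJ) (pathInSlice_iff_range_subset.1 hβJ)
  obtain ⟨J₁, h₁, J₂, h₂, hne⟩ := hsp1 δ ⟨isPathP_of_path δ hα.2, J, hJ, hδJ⟩
  have hαδ := SGamma_anti (Ω := Ω₂) (subset_union_left.trans hδ.symm.subset)
  have hβδ := SGamma_anti (Ω := Ω₂) (subset_union_right.trans hδ.symm.subset)
  rw [hF.apply_eq_solveStem hα (hαδ h₁) (hαδ h₂) hne,
    hF.apply_eq_solveStem hβ (hβδ h₁) (hβδ h₂) hne, hend]

end Stem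

section SliceConj

variable {Ω₁ Ω₂ : Set (Fin n → ℍ[ℝ])} {f : (Fin n → ℍ[ℝ]) → ℍ[ℝ]}

theorem PathSlice.isStem_stemOf (hf : PathSlice Ω₂ f) : IsStem Ω₂ f (stemOf Ω₂ f) :=
  Classical.epsilon_spec hf

theorem scrF_eq_stemOf (hsp1 : ∀ γ : PathC n, PathIn Ω₁ γ → (SGamma Ω₂ γ).Nontrivial)
    (hf : PathSlice Ω₂ f) {q : Fin n → ℍ[ℝ]} (hq : ¬ ∀ k, IsRealQ (q k)) (hI : frakI q ∈ SQ)
    {γ : PathC n} (hγ : IsPathP γ) (hγI : pathInSlice Ω₁ (frakI q) γ)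
    (hγq : psi (frakI q) (γ 1) = q) : scrF Ω₁ Ω₂ f q = stemOf Ω₂ f γ := by
  rw [scrF, if_neg hq]
  obtain ⟨⟨hδ, -⟩, hδI, hδq⟩ := Classical.epsilon_spec
    (p := fun δ : PathC n => PathIn Ω₁ δ ∧ pathInSlice Ω₁ (frakI q) δ ∧ psi (frakI q) (δ 1) = q)
    ⟨γ, ⟨hγ, _, hI, hγI⟩, hγI, hγq⟩
  exact hf.isStem_stemOf.eq_of_pathInSlice hsp1 hδ hγ hI hδI hγI
    (psi_injective hI (hδq.trans hγq.symm))

theorem sliceConj_psi (hsp1 : ∀ γ : PathC n, PathIn Ω₁ γ → (SGamma Ω₂ γ).Nontrivial)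
    (hf : PathSlice Ω₂ f) {γ : PathC n} (hγ : IsPathP γ) {I : ℍ[ℝ]} (hI : I ∈ SGamma Ω₁ γ) :
    sliceConj Ω₁ Ω₂ f (psi I (γ 1)) = star (stemOf Ω₂ f γ).1 + I * star (stemOf Ω₂ f γ).2 := by
  have hF := hf.isStem_stemOf
  obtain ⟨J, hJ, K, hK, hJK⟩ := hsp1 γ ⟨hγ, I, hI⟩
  by_cases hreal : ∀ k, (γ 1 k).im = 0
  · have hq := (forall_isRealQ_psi_iff hI.1).2 hreal
    rw [show sliceConj Ω₁ Ω₂ f (psi I (γ 1)) = star (f (psi I (γ 1))) by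
      simp [sliceConj, scrF, hq, frakI_of_forall_isRealQ hq], hF.apply_of_real hγ hJ hK hJK hreal,
      psi_of_real hreal I (I := J)]
    simp
  have hq := (forall_isRealQ_psi_iff hI.1).not.2 hreal
  rcases frakI_psi hI.1 hreal with h | h
  · rw [sliceConj, scrF_eq_stemOf hsp1 hf hq (by rw [h]; exact hI.1) hγ (by rw [h]; exact hI.2)
      (by rw [h]), h]
  -- for `𝕴 = -I` the stem is read off the conjugate path, which lies in the slice `-I`
  · rw [sliceConj, scrF_eq_stemOf hsp1 hf hq (by rw [h]; exact neg_mem_SQ hI.1) hγ.star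
      (by rw [h]; exact hI.2.star) (by rw [h, Pi.star_apply, psi_neg_star]),
      hF.apply_star hγ hJ hK hJK, h]
    simp

theorem sliceConj_comp_psi_eventuallyEq (ho1 : SliceOpen Ω₁) (ho2 : SliceOpen Ω₂)
    (hsp1 : ∀ γ : PathC n, PathIn Ω₁ γ → (SGamma Ω₂ γ).Nontrivial) (hf : PathSlice Ω₂ f)
    {η : PathC n} (hη : IsPathP η) {I J K : ℍ[ℝ]} (hI : I ∈ SGamma Ω₁ η) (hJ : J ∈ SGamma Ω₂ η)
    (hK : K ∈ SGamma Ω₂ η) (hJK : J ≠ K) :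
    (fun w => sliceConj Ω₁ Ω₂ f (psi I w)) =ᶠ[𝓝 (η 1)] fun w =>
      (star (solveStem J K (f (psi J w)) (f (psi K w)))).1
        + I * (star (solveStem J K (f (psi J w)) (f (psi K w)))).2 := by
  have hU : {w | psi I w ∈ Ω₁} ∩ {w | psi J w ∈ Ω₂} ∩ {w | psi K w ∈ Ω₂} ∈ 𝓝 (η 1) :=
    (((ho1 I hI.1).inter (ho2 J hJ.1)).inter (ho2 K hK.1)).mem_nhds ⟨⟨hI.2 1, hJ.2 1⟩, hK.2 1⟩
  obtain ⟨r, hr, hball⟩ := Metric.mem_nhds_iff.1 hU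
  filter_upwards [Metric.ball_mem_nhds _ hr] with w hw
  obtain ⟨δ, hδ, rfl, hδη⟩ := hη.exists_extend (convex_ball _ r) (Metric.mem_ball_self hr) hw
  have hδI := mem_SGamma_of_range_subset hI hδη fun _ h => (hball h).1.1
  have hδJ := mem_SGamma_of_range_subset hJ hδη fun _ h => (hball h).1.2
  have hδK := mem_SGamma_of_range_subset hK hδη fun _ h => (hball h).2
  rw [sliceConj_psi hsp1 hf hδ hδI, hf.isStem_stemOf.apply_eq_solveStem hδ hδJ hδK hJK]
  rfl

end SliceConj

theorem sliceConj_sliceRegular_general {n : ℕ} (Ω₁ Ω₂ : Set (Fin n → ℍ[ℝ]))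
    (ho1 : SliceOpen Ω₁) (ho2 : SliceOpen Ω₂)
    (hrpc : RealPathConnected Ω₁) (hsp : StemPreserving Ω₁ Ω₂)
    (f : (Fin n → ℍ[ℝ]) → ℍ[ℝ]) (hf : SliceRegular Ω₂ f) :
    SliceRegular Ω₁ (sliceConj Ω₁ Ω₂ f) := by
  refine sliceRegular_of_leftHolomorphicAt ho1 fun I hI z hz => ?_
  obtain ⟨η, hη, hηI, rfl⟩ := hrpc.exists_pathInSlice hI hz
  obtain ⟨J, hJ, K, hK, hJK⟩ := hsp.1 η ⟨hη, I, hI, hηI⟩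
  have hstem := stemHolomorphicAt_solveStem (mul_self_of_mem_SQ hJ.1) (mul_self_of_mem_SQ hK.1)
    hJK (hf.leftHolomorphicAt ho2 hJ.1 (hJ.2 1)) (hf.leftHolomorphicAt ho2 hK.1 (hK.2 1))
  exact (hstem.star.leftHolomorphicAt (mul_self_of_mem_SQ hI)).congr_of_eventuallyEq
    (sliceConj_comp_psi_eventuallyEq ho1 ho2 hsp.1 (hf.pathSlice ho2) hη ⟨hI, hηI⟩ hJ hK hJK)

/-- the `Ω₁`-slice conjugation of a weakly slice regular function is
weakly slice regular. -/
theorem sliceConj_sliceRegular {n : ℕ} (Ω₁ Ω₂ : Set (Fin n → ℍ[ℝ]))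
    (h1 : Ω₁ ⊆ HSliceCone n) (h2 : Ω₂ ⊆ HSliceCone n)
    (ho1 : SliceOpen Ω₁) (ho2 : SliceOpen Ω₂)
    (hrpc : RealPathConnected Ω₁) (hsp : StemPreserving Ω₁ Ω₂)
    (f : (Fin n → ℍ[ℝ]) → ℍ[ℝ]) (hf : SliceRegular Ω₂ f) :
    SliceRegular Ω₁ (sliceConj Ω₁ Ω₂ f) :=
  sliceConj_sliceRegular_general Ω₁ Ω₂ ho1 ho2 hrpc hsp f hf

end
end

section
/- Let Ω₁ ⊂ ℍ_s^n be real-path-connected, let Ω₂ ⊂ ℍ_s^n be Ω₁-stem-preserving, and let f : Ω₂ → ℍ be path-slice. Then the symmetrization f^s_{Ω₁} is slice-preserving, i.e. f^s_{Ω₁}((Ω₁)_I) ⊂ ℂ_I for every I ∈ 𝕊. -/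
open scoped Quaternion
open Classical

attribute [local instance] Classical.propDecidable

noncomputable section

lemma SQ_mul {I : ℍ[ℝ]} (hI : I ∈ SQ) : I * I = -1 := by
  have := hI; rwa [SQ, Set.mem_setOf_eq, sq] at this

lemma SQ_norm {I : ℍ[ℝ]} (hI : I ∈ SQ) : ‖I‖ = 1 := by
  have h : ‖I‖ * ‖I‖ = 1 := by rw [← norm_mul, SQ_mul hI, norm_neg, norm_one]
  nlinarith [norm_nonneg I]

lemma SQ_star {I : ℍ[ℝ]} (hI : I ∈ SQ) : star I = -I := by
  have hn : Quaternion.normSq I = 1 := by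
    rw [Quaternion.normSq_eq_norm_mul_self, SQ_norm hI, mul_one]
  have h1 : star I * I = 1 := by
    rw [Quaternion.star_mul_self, hn]; norm_num
  have h2 : I * (-I) = 1 := by rw [mul_neg, SQ_mul hI, neg_neg]
  calc star I = star I * (I * (-I)) := by rw [h2, mul_one]
    _ = (star I * I) * (-I) := by rw [mul_assoc]
    _ = -I := by rw [h1, one_mul]

lemma SQ_re {I : ℍ[ℝ]} (hI : I ∈ SQ) : I.re = 0 := by
  have := congrArg QuaternionAlgebra.re (SQ_star hI)
  simp at this
  linarith

lemma key {I : ℍ[ℝ]} (hI : I ∈ SQ) (c : ℝ) (hc : c * c = 1) (F1 F2 : ℍ[ℝ]) :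
    (star F1 + (c • I) * star F2) * F1 + ((c • I) * (star F1 + (c • I) * star F2)) * F2
      = ((Quaternion.normSq F1 - Quaternion.normSq F2 : ℝ) : ℍ[ℝ])
        + (c * (2 * (star F2 * F1).re)) • I := by
  have hII : I * I = -1 := SQ_mul hI
  have hS : star F2 * F1 + star F1 * F2 = ((2 * (star F2 * F1).re : ℝ) : ℍ[ℝ]) := by
    conv_lhs => rw [show star F1 * F2 = star (star F2 * F1) by rw [star_mul, star_star]]
    exact Quaternion.self_add_star' _
  have h1 : ((c • I) * star F2) * F1 = c • (I * (star F2 * F1)) := by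
    rw [smul_mul_assoc, smul_mul_assoc, mul_assoc]
  have h2 : ((c • I) * star F1) * F2 = c • (I * (star F1 * F2)) := by
    rw [smul_mul_assoc, smul_mul_assoc, mul_assoc]
  have h3 : ((c • I) * ((c • I) * star F2)) * F2 = - ((Quaternion.normSq F2 : ℝ) : ℍ[ℝ]) := by
    simp only [smul_mul_assoc, mul_smul_comm, smul_smul]
    rw [hc, one_smul, ← mul_assoc I I, hII, neg_one_mul, neg_mul,
      Quaternion.star_mul_self]
  rw [add_mul, mul_add, add_mul, h1, h2, h3, Quaternion.star_mul_self]
  have hmid : c • (I * (star F2 * F1)) + c • (I * (star F1 * F2))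
      = (c * (2 * (star F2 * F1).re)) • I := by
    rw [← smul_add, ← mul_add, hS, Quaternion.mul_coe_eq_smul, smul_smul]
  rw [show ((Quaternion.normSq F1 : ℝ) : ℍ[ℝ]) + c • (I * (star F2 * F1)) +
      (c • (I * (star F1 * F2)) + -((Quaternion.normSq F2 : ℝ) : ℍ[ℝ]))
      = ((Quaternion.normSq F1 : ℝ) : ℍ[ℝ]) - ((Quaternion.normSq F2 : ℝ) : ℍ[ℝ])
        + (c • (I * (star F2 * F1)) + c • (I * (star F1 * F2))) by abel, hmid]
  push_cast
  ring_nf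

/-- the symmetrization of a path-slice function is slice-preserving. -/
theorem symm_slicePreserving {n : ℕ} (Ω₁ Ω₂ : Set (Fin n → ℍ[ℝ]))
    (h1 : Ω₁ ⊆ HSliceCone n) (h2 : Ω₂ ⊆ HSliceCone n)
    (hrpc : RealPathConnected Ω₁) (hsp : StemPreserving Ω₁ Ω₂)
    (f : (Fin n → ℍ[ℝ]) → ℍ[ℝ]) (hf : PathSlice Ω₂ f) :
    ∀ I ∈ SQ, ∀ q ∈ Ω₁, q ∈ Set.range (psi (n := n) I) → symmF Ω₁ Ω₂ f q ∈ CI I := by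
  intro I hI q _hq hqr
  obtain ⟨z, hz⟩ := hqr
  by_cases hreal : ∀ k, IsRealQ (q k)
  · refine ⟨Quaternion.normSq (f q), 0, ?_⟩
    have hF : frakI q = 0 := dif_pos hreal
    have hs : scrF Ω₁ Ω₂ f q = (f q, 0) := if_pos hreal
    simp [symmF, starProdF, sliceConj, hs, hF, Quaternion.star_mul_self]
  · have hne : (Finset.univ.filter fun k => ¬ IsRealQ (q k)).Nonempty := by
      obtain ⟨k, hk⟩ := not_forall.mp hreal
      exact ⟨k, Finset.mem_filter.mpr ⟨Finset.mem_univ k, hk⟩⟩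
    set k := (Finset.univ.filter fun k => ¬ IsRealQ (q k)).min' hne with hkdef
    have hknr : ¬ IsRealQ (q k) :=
      (Finset.mem_filter.mp (Finset.min'_mem _ hne)).2
    have hqk : q k = (((z k).re : ℝ) : ℍ[ℝ]) + (z k).im • I := by
      rw [← hz]; rfl
    have hm : (z k).im ≠ 0 := by
      intro h
      exact hknr ⟨(z k).re, by rw [hqk, h, zero_smul, add_zero]⟩
    set m := (z k).im with hmdef
    have hre : (q k).re = (z k).re := by
      rw [hqk]
      simp [Quaternion.re_smul, SQ_re hI]
    have hsub : q k - (((q k).re : ℝ) : ℍ[ℝ]) = m • I := by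
      rw [hre, hqk, add_sub_cancel_left]
    set c := |m|⁻¹ * m with hcdef
    have hfr : frakI q = c • I := by
      have : frakI q = ‖q k - (((q k).re : ℝ) : ℍ[ℝ])‖⁻¹ • (q k - (((q k).re : ℝ) : ℍ[ℝ])) := by
        unfold frakI
        rw [dif_neg hreal]
      rw [this, hsub, norm_smul, SQ_norm hI, mul_one, Real.norm_eq_abs, smul_smul]
    have habs : |m| ≠ 0 := abs_ne_zero.mpr hm
    have hc : c * c = 1 := by
      have h1 : |m| * |m| = m * m := abs_mul_abs_self m
      have h2 : c * c = (m * m) / (|m| * |m|) := by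
        rw [hcdef]; field_simp
      rw [h2, h1, div_self (mul_ne_zero hm hm)]
    refine ⟨Quaternion.normSq (scrF Ω₁ Ω₂ f q).1 - Quaternion.normSq (scrF Ω₁ Ω₂ f q).2,
      c * (2 * (star (scrF Ω₁ Ω₂ f q).2 * (scrF Ω₁ Ω₂ f q).1).re), ?_⟩
    simp only [symmF, starProdF, sliceConj]
    rw [hfr]
    exact key hI c hc _ _


end
end
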